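/- arXiv:2604.00512 — 3 statements merged into one kernel-verified Lean document; each statement's English description precedes it below -/
import Mathlib

section
/- Let A be a real symmetric n×n matrix with eigenvalues λ_1 ≥ ⋯ ≥ λ_n. If z_1, …, z_k are mutually orthonormal vectors such that ⟨z_i, A z_i⟩ = λ_i for i = 1, …, k, then each z_i is an eigenvector of A with eigenvalue λ_i. -/
/-!
Expand in the eigenbasis: with `c a = ⟨v a, z⟩` we have `∑ c a ^ 2 = ‖z‖ ^ 2` and
`⟨z, A z⟩ = ∑ lam a * c a ^ 2`. Induct on `i` and put `μ = lam i`. The earlier `z j` with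
`lam j > μ` are eigenvectors, hence orthonormal vectors in the span of the `v a` with `lam a > μ`;
since `lam` is decreasing there are exactly as many of them as that span has dimensions, so they
span it, and `z i`, orthogonal to all of them, has `c a = 0` whenever `lam a > μ`. Then
`0 = ∑ (μ - lam a) * c a ^ 2` is a sum of nonnegative terms, so `c a = 0` unless `lam a = μ`,
which says that `z i` is an eigenvector for `μ`.
-/

open Matrix

section Orthonormal

variable {ι R : Type*} [Fintype ι] [DecidableEq ι] [CommRing R] {u : ι → ι → R}

theorem transpose_mul_self_eq_one_of_orthonormal
    (hu : ∀ a b, u a ⬝ᵥ u b = if a = b then 1 else 0) : (of u)ᵀ * of u = 1 := by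
  refine mul_eq_one_comm.mp (ext fun a b => ?_)
  simpa [mul_apply, one_apply, dotProduct] using hu a b

theorem dotProduct_eq_sum_mul_of_orthonormal
    (hu : ∀ a b, u a ⬝ᵥ u b = if a = b then 1 else 0) (w w' : ι → R) :
    w ⬝ᵥ w' = ∑ a, (u a ⬝ᵥ w) * (u a ⬝ᵥ w') := by
  calc w ⬝ᵥ w' = w ⬝ᵥ ((of u)ᵀ * of u) *ᵥ w' := by
        rw [transpose_mul_self_eq_one_of_orthonormal hu, one_mulVec]
    _ = (of u *ᵥ w) ⬝ᵥ (of u *ᵥ w') := by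
        rw [← mulVec_mulVec, dotProduct_mulVec, vecMul_transpose]
    _ = ∑ a, (u a ⬝ᵥ w) * (u a ⬝ᵥ w') := rfl

theorem eq_zero_of_orthonormal_of_forall_dotProduct_eq_zero
    (hu : ∀ a b, u a ⬝ᵥ u b = if a = b then 1 else 0) {w : ι → R}
    (hw : ∀ a, u a ⬝ᵥ w = 0) : w = 0 := by
  calc w = ((of u)ᵀ * of u) *ᵥ w := by
        rw [transpose_mul_self_eq_one_of_orthonormal hu, one_mulVec]
    _ = (of u)ᵀ *ᵥ (of u *ᵥ w) := (mulVec_mulVec _ _ _).symm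
    _ = 0 := by
        rw [show of u *ᵥ w = 0 from funext hw, mulVec_zero]

/-- `hy_mem` puts each `y b` in the span of the `u a` with `p a`; an orthonormal family of that
many vectors there spans it. -/
theorem dotProduct_eq_zero_of_orthonormal_of_orthogonal {p : ι → Prop} [DecidablePred p]
    (hu : ∀ a b, u a ⬝ᵥ u b = if a = b then 1 else 0) {y : {a // p a} → ι → R}
    (hy : ∀ b b', y b ⬝ᵥ y b' = if b = b' then 1 else 0)
    (hy_mem : ∀ b a, ¬ p a → u a ⬝ᵥ y b = 0) {w : ι → R} (hw : ∀ b, y b ⬝ᵥ w = 0)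
    {a : ι} (ha : p a) : u a ⬝ᵥ w = 0 := by
  have hsum (b : {a // p a}) (x : ι → R) :
      ∑ a' : {a // p a}, (u a' ⬝ᵥ y b) * (u a' ⬝ᵥ x) = y b ⬝ᵥ x := by
    rw [dotProduct_eq_sum_mul_of_orthonormal hu, ← Fintype.sum_subtype_add_sum_subtype p,
      Fintype.sum_eq_zero (fun a' : {a // ¬ p a} => _) fun a' => by rw [hy_mem b a' a'.2, zero_mul],
      add_zero]
  have hcoord := eq_zero_of_orthonormal_of_forall_dotProduct_eq_zero
    (u := fun b a' : {a // p a} => u a' ⬝ᵥ y b) (w := fun a' => u a' ⬝ᵥ w)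
    (fun b b' => (hsum b _).trans (hy b b')) fun b => (hsum b w).trans (hw b)
  exact congrFun hcoord ⟨a, ha⟩

end Orthonormal

theorem dotProduct_mulVec_eq_mul_of_mulVec_eq_smul {ι R : Type*} [Fintype ι] [CommRing R]
    {A : Matrix ι ι R} (hA : A.IsSymm) {v : ι → R} {t : R} (hv : A *ᵥ v = t • v) (w : ι → R) :
    v ⬝ᵥ A *ᵥ w = t * (v ⬝ᵥ w) := by
  rw [dotProduct_mulVec, ← mulVec_transpose, hA.eq, hv, smul_dotProduct, smul_eq_mul]

section Eigenbasis

variable {ι R : Type*} [Fintype ι] [DecidableEq ι] [CommRing R] {A : Matrix ι ι R}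
  {v : ι → ι → R} {lam : ι → R}

theorem dotProduct_mulVec_self_eq_sum_of_eigenbasis (hA : A.IsSymm)
    (horth : ∀ a b, v a ⬝ᵥ v b = if a = b then 1 else 0) (heig : ∀ a, A *ᵥ v a = lam a • v a)
    (z : ι → R) : z ⬝ᵥ A *ᵥ z = ∑ a, lam a * (v a ⬝ᵥ z) ^ 2 := by
  rw [dotProduct_eq_sum_mul_of_orthonormal horth]
  refine Fintype.sum_congr _ _ fun a => ?_
  rw [dotProduct_mulVec_eq_mul_of_mulVec_eq_smul hA (heig a)]
  ring

theorem mulVec_eq_smul_iff_of_eigenbasis [IsDomain R] (hA : A.IsSymm)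
    (horth : ∀ a b, v a ⬝ᵥ v b = if a = b then 1 else 0) (heig : ∀ a, A *ᵥ v a = lam a • v a)
    {t : R} {z : ι → R} : A *ᵥ z = t • z ↔ ∀ a, lam a ≠ t → v a ⬝ᵥ z = 0 := by
  have hcoord (a : ι) : v a ⬝ᵥ (A *ᵥ z - t • z) = (lam a - t) * (v a ⬝ᵥ z) := by
    rw [dotProduct_sub, dotProduct_mulVec_eq_mul_of_mulVec_eq_smul hA (heig a), dotProduct_smul,
      smul_eq_mul, sub_mul]
  constructor
  · intro hz a ha
    have h := hcoord a
    rw [sub_eq_zero.mpr hz, dotProduct_zero] at h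
    exact (mul_eq_zero.mp h.symm).resolve_left (sub_ne_zero.mpr ha)
  · intro hz
    refine sub_eq_zero.mp (eq_zero_of_orthonormal_of_forall_dotProduct_eq_zero horth fun a => ?_)
    rw [hcoord]
    by_cases ha : lam a = t
    · rw [ha, sub_self, zero_mul]
    · rw [hz a ha, mul_zero]

end Eigenbasis

section Ordered

variable {R : Type*} [CommRing R] [LinearOrder R] [IsStrictOrderedRing R]

theorem mulVec_eq_smul_of_dotProduct_mulVec_self_eq {ι : Type*} [Fintype ι] [DecidableEq ι]
    {A : Matrix ι ι R} {v : ι → ι → R} {lam : ι → R} (hA : A.IsSymm)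
    (horth : ∀ a b, v a ⬝ᵥ v b = if a = b then 1 else 0) (heig : ∀ a, A *ᵥ v a = lam a • v a)
    {μ : R} {z : ι → R} (hz : z ⬝ᵥ z = 1) (hray : z ⬝ᵥ A *ᵥ z = μ)
    (hhigh : ∀ a, μ < lam a → v a ⬝ᵥ z = 0) : A *ᵥ z = μ • z := by
  have hsum : ∑ a, (μ - lam a) * (v a ⬝ᵥ z) ^ 2 = 0 := by
    rw [dotProduct_eq_sum_mul_of_orthonormal horth] at hz
    rw [dotProduct_mulVec_self_eq_sum_of_eigenbasis hA horth heig] at hray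
    simp only [← sq] at hz
    simp only [sub_mul, Finset.sum_sub_distrib, ← Finset.mul_sum, hz, hray, mul_one, sub_self]
  have hnonneg (a : ι) : 0 ≤ (μ - lam a) * (v a ⬝ᵥ z) ^ 2 := by
    rcases le_or_gt (lam a) μ with h | h
    · exact mul_nonneg (sub_nonneg.mpr h) (sq_nonneg _)
    · rw [hhigh a h, sq, mul_zero, mul_zero]
  refine (mulVec_eq_smul_iff_of_eigenbasis hA horth heig).mpr fun a ha => ?_
  have h := congrFun ((Fintype.sum_eq_zero_iff_of_nonneg hnonneg).mp hsum) a
  exact pow_eq_zero_iff two_ne_zero |>.mp <|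
    (mul_eq_zero.mp h).resolve_left (sub_ne_zero.mpr (Ne.symm ha))

theorem mulVec_eq_smul_of_forall_lt {n k : ℕ} (hk : k ≤ n) {A : Matrix (Fin n) (Fin n) R}
    {v : Fin n → Fin n → R} {lam : Fin n → R} (hA : A.IsSymm)
    (horth : ∀ a b, v a ⬝ᵥ v b = if a = b then 1 else 0) (heig : ∀ a, A *ᵥ v a = lam a • v a)
    (hmono : ∀ a b : Fin n, a ≤ b → lam b ≤ lam a) {z : Fin k → Fin n → R}
    (hz : ∀ i j, z i ⬝ᵥ z j = if i = j then 1 else 0)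
    (hray : ∀ i, z i ⬝ᵥ A *ᵥ z i = lam (Fin.castLE hk i)) (i : Fin k)
    (ih : ∀ j < i, A *ᵥ z j = lam (Fin.castLE hk j) • z j) :
    A *ᵥ z i = lam (Fin.castLE hk i) • z i := by
  set μ := lam (Fin.castLE hk i)
  have hlt (a : Fin n) (ha : μ < lam a) : (a : ℕ) < i := by
    by_contra h
    exact (hmono (Fin.castLE hk i) a (not_lt.mp h)).not_gt ha
  -- the earlier `z j` with eigenvalue `lam b`, for each `lam b > μ`
  let idx (b : {a // μ < lam a}) : Fin k := ⟨b.1, (hlt b.1 b.2).trans i.2⟩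
  refine mulVec_eq_smul_of_dotProduct_mulVec_self_eq hA horth heig (by simp [hz]) (hray i)
    fun a ha => dotProduct_eq_zero_of_orthonormal_of_orthogonal horth (y := fun b => z (idx b))
      (fun b b' => ?_) (fun b a' ha' => ?_) (fun b => ?_) ha
  · simp [hz, idx, Fin.ext_iff, Subtype.ext_iff]
  · have hb : A *ᵥ z (idx b) = lam b • z (idx b) := ih (idx b) (hlt b.1 b.2)
    exact (mulVec_eq_smul_iff_of_eigenbasis hA horth heig).mp hb a' fun h => ha' (h ▸ b.2)
  · rw [hz, if_neg (show idx b < i from hlt b.1 b.2).ne]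

end Ordered

/-- let `A` be real symmetric with eigenvalues `lam 0 ≥ ⋯ ≥ lam (n-1)`
(with orthonormal eigenbasis `v`). If `z 0, …, z (k-1)` are mutually orthonormal with
`⟨z i, A z i⟩ = lam i` for each `i`, then each `z i` is an eigenvector of `A` with
eigenvalue `lam i`. -/
theorem stmt5 {n k : ℕ} (hk : k ≤ n) (A : Matrix (Fin n) (Fin n) ℝ) (hA : A.IsSymm)
    (v : Fin n → Fin n → ℝ) (lam : Fin n → ℝ)
    (hmono : ∀ i j : Fin n, i ≤ j → lam j ≤ lam i)
    (horth : ∀ i j, v i ⬝ᵥ v j = if i = j then 1 else 0)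
    (heig : ∀ i, A.mulVec (v i) = lam i • v i)
    (z : Fin k → Fin n → ℝ)
    (hz : ∀ i j, z i ⬝ᵥ z j = if i = j then 1 else 0)
    (hray : ∀ i : Fin k, z i ⬝ᵥ A.mulVec (z i) = lam (Fin.castLE hk i)) :
    ∀ i : Fin k, A.mulVec (z i) = lam (Fin.castLE hk i) • z i := by
  intro i
  induction i using WellFoundedLT.induction with
  | _ i ih => exact mulVec_eq_smul_of_forall_lt hk hA horth heig hmono hz hray i ih
end

section
/- Suppose c > 0 is a constant such that λ_1(G) + λ_2(G) ≤ c·n + o(n) holds for all graphs G on n vertices (i.e., for every ε > 0 there is N such that λ_1(G) + λ_2(G) ≤ (c+ε)n for all graphs G on n ≥ N vertices). Then λ_1(G) + λ_2(G) ≤ c·n holds for every graph G on n vertices. -/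
/-
The `t`-blowup `G.comap Fin.divNat` of a graph `G` on `n` vertices has `n t` vertices, and lifting
eigenvectors along the blowup map multiplies their eigenvalues by `t` and keeps orthogonal ones
orthogonal. Orthogonal eigenvectors sit at distinct indices of the eigenvalue list, since the
geometric multiplicity of an eigenvalue is at most its algebraic multiplicity; hence
`t (λ₁(G) + λ₂(G)) ≤ λ₁(G⁽ᵗ⁾) + λ₂(G⁽ᵗ⁾) ≤ (c + ε) n t` once `n t` is large, and letting
`ε → 0` gives the claim.
-/

open Matrix

/-- The adjacency matrix of a graph is Hermitian (it is real symmetric). -/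
theorem adjMatrix_isHermitian {n : ℕ} (G : SimpleGraph (Fin n)) [DecidableRel G.Adj] :
    (G.adjMatrix ℝ).IsHermitian := by
  rw [Matrix.IsHermitian, conjTranspose_eq_transpose_of_trivial]
  exact G.isSymm_adjMatrix

/-- `λ₁(G) + λ₂(G)`: the sum of the two largest adjacency eigenvalues (with
multiplicity), expressed as the supremum of `μ i + μ j` over pairs of distinct
indices `i ≠ j`, where `μ` enumerates all adjacency eigenvalues with multiplicity. -/
noncomputable def specSum {n : ℕ} (G : SimpleGraph (Fin n)) [DecidableRel G.Adj] : ℝ :=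
  sSup {x : ℝ | ∃ i j : Fin n, i ≠ j ∧
    x = (adjMatrix_isHermitian G).eigenvalues i + (adjMatrix_isHermitian G).eigenvalues j}

open Module Finset

lemma Matrix.linearIndependent_pair_of_dotProduct_eq_zero {m : Type*} [Fintype m] {u v : m → ℝ}
    (hu : u ≠ 0) (hv : v ≠ 0) (huv : u ⬝ᵥ v = 0) : LinearIndependent ℝ ![u, v] := by
  rw [LinearIndependent.pair_iff]
  intro s t hst
  have hs : s * (u ⬝ᵥ u) = 0 := by
    simpa [add_dotProduct, smul_dotProduct, dotProduct_comm v u, huv] using congrArg (· ⬝ᵥ u) hst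
  have ht : t * (v ⬝ᵥ v) = 0 := by
    simpa [add_dotProduct, smul_dotProduct, huv] using congrArg (· ⬝ᵥ v) hst
  exact ⟨(mul_eq_zero.mp hs).resolve_right (dotProduct_self_eq_zero.not.mpr hu),
    (mul_eq_zero.mp ht).resolve_right (dotProduct_self_eq_zero.not.mpr hv)⟩

section Eigenvalues

variable {m : Type*} [Fintype m] [DecidableEq m] {M : Matrix m m ℝ}

lemma Matrix.IsHermitian.finrank_eigenspace_le_card (hM : M.IsHermitian) (a : ℝ) :
    finrank ℝ (End.eigenspace (toLin' M) a) ≤ #{i | hM.eigenvalues i = a} := by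
  have h := LinearMap.finrank_eigenspace_le (toLin' M) a
  rw [charpoly_toLin', ← Polynomial.count_roots, hM.roots_charpoly_eq_eigenvalues,
    Multiset.count_map] at h
  simp only [eq_comm (a := a)] at h
  exact h

lemma Matrix.mem_eigenspace_toLin' {u : m → ℝ} {a : ℝ} (hu : M *ᵥ u = a • u) :
    u ∈ End.eigenspace (toLin' M) a :=
  End.mem_eigenspace_iff.mpr (by rwa [toLin'_apply])

lemma Matrix.IsHermitian.exists_eigenvalues_eq (hM : M.IsHermitian) {u : m → ℝ} {a : ℝ}
    (hu : M *ᵥ u = a • u) (hu0 : u ≠ 0) : ∃ i, hM.eigenvalues i = a := by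
  have h : 1 ≤ finrank ℝ (End.eigenspace (toLin' M) a) := by
    rw [← finrank_span_singleton (K := ℝ) hu0]
    exact Submodule.finrank_mono ((Submodule.span_singleton_le_iff_mem _ _).mpr
      (mem_eigenspace_toLin' hu))
  obtain ⟨i, hi⟩ := card_pos.mp (h.trans (hM.finrank_eigenspace_le_card a))
  exact ⟨i, (mem_filter.mp hi).2⟩

lemma Matrix.IsHermitian.exists_ne_eigenvalues_eq (hM : M.IsHermitian) {u v : m → ℝ} {a b : ℝ}
    (hu : M *ᵥ u = a • u) (hv : M *ᵥ v = b • v) (hu0 : u ≠ 0) (hv0 : v ≠ 0)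
    (huv : u ⬝ᵥ v = 0) :
    ∃ i j, i ≠ j ∧ hM.eigenvalues i = a ∧ hM.eigenvalues j = b := by
  obtain rfl | hab := eq_or_ne a b
  · have h2 : 2 ≤ finrank ℝ (End.eigenspace (toLin' M) a) := by
      have hspan : Submodule.span ℝ (Set.range ![u, v]) ≤ End.eigenspace (toLin' M) a :=
        Submodule.span_le.mpr <| Set.range_subset_iff.mpr <|
          Fin.forall_fin_two.mpr ⟨mem_eigenspace_toLin' hu, mem_eigenspace_toLin' hv⟩
      simpa [finrank_span_eq_card (linearIndependent_pair_of_dotProduct_eq_zero hu0 hv0 huv)]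
        using Submodule.finrank_mono hspan
    obtain ⟨i, hi, j, hj, hij⟩ := one_lt_card.mp (h2.trans (hM.finrank_eigenspace_le_card a))
    exact ⟨i, j, hij, (mem_filter.mp hi).2, (mem_filter.mp hj).2⟩
  · obtain ⟨i, hi⟩ := hM.exists_eigenvalues_eq hu hu0
    obtain ⟨j, hj⟩ := hM.exists_eigenvalues_eq hv hv0
    exact ⟨i, j, fun h => hab (hi ▸ hj ▸ congrArg hM.eigenvalues h), hi, hj⟩

lemma Matrix.IsHermitian.eigenvectorBasis_ne_zero (hM : M.IsHermitian) (i : m) :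
    ⇑(hM.eigenvectorBasis i) ≠ 0 := fun h =>
  hM.eigenvectorBasis.orthonormal.ne_zero i (by ext k; exact congrFun h k)

lemma Matrix.IsHermitian.eigenvectorBasis_dotProduct (hM : M.IsHermitian) {i j : m}
    (hij : i ≠ j) : ⇑(hM.eigenvectorBasis i) ⬝ᵥ ⇑(hM.eigenvectorBasis j) = 0 := by
  rw [dotProduct_comm]
  simpa [EuclideanSpace.inner_eq_star_dotProduct] using hM.eigenvectorBasis.orthonormal.2 hij

end Eigenvalues

section Blowup

variable {V W : Type*} [Fintype V] [Fintype W] {t : ℕ} (e : W ≃ V × Fin t)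

lemma Equiv.sum_comp_fst {M : Type*} [AddCommMonoid M] (g : V → M) :
    ∑ x, g (e x).1 = t • ∑ v, g v := by
  rw [e.sum_comp (fun p => g p.1), Fintype.sum_prod_type_right]
  simp

lemma Matrix.submatrix_mulVec_comp (A : Matrix V V ℝ) (w : V → ℝ) :
    A.submatrix (Prod.fst ∘ e) (Prod.fst ∘ e) *ᵥ (w ∘ Prod.fst ∘ e) =
      (t : ℝ) • (A *ᵥ w) ∘ Prod.fst ∘ e := by
  funext x
  simpa [mulVec, dotProduct] using e.sum_comp_fst (fun v => A (e x).1 v * w v)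

lemma Matrix.comp_dotProduct_comp (w z : V → ℝ) :
    (w ∘ Prod.fst ∘ e) ⬝ᵥ (z ∘ Prod.fst ∘ e) = t * (w ⬝ᵥ z) := by
  simpa [dotProduct] using e.sum_comp_fst (fun v => w v * z v)

lemma Matrix.IsHermitian.exists_ne_eigenvalues_submatrix [DecidableEq V] [DecidableEq W]
    {A : Matrix V V ℝ} (hA : A.IsHermitian) {B : Matrix W W ℝ} (hB : B.IsHermitian)
    (hBA : B = A.submatrix (Prod.fst ∘ e) (Prod.fst ∘ e)) (ht : t ≠ 0) {i j : V} (hij : i ≠ j) :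
    ∃ i' j', i' ≠ j' ∧ hB.eigenvalues i' = t * hA.eigenvalues i ∧
      hB.eigenvalues j' = t * hA.eigenvalues j := by
  have lift_eigen (k : V) : B *ᵥ (hA.eigenvectorBasis k ∘ Prod.fst ∘ e) =
      ((t : ℝ) * hA.eigenvalues k) • (hA.eigenvectorBasis k ∘ Prod.fst ∘ e) := by
    rw [hBA, submatrix_mulVec_comp, hA.mulVec_eigenvectorBasis, mul_smul]
    rfl
  have lift_ne_zero (k : V) : (hA.eigenvectorBasis k ∘ Prod.fst ∘ e) ≠ 0 := fun h => by
    have := comp_dotProduct_comp e (hA.eigenvectorBasis k) (hA.eigenvectorBasis k)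
    rw [h, zero_dotProduct, eq_comm, mul_eq_zero, dotProduct_self_eq_zero] at this
    exact this.elim (by exact_mod_cast ht) (hA.eigenvectorBasis_ne_zero k)
  refine hB.exists_ne_eigenvalues_eq (lift_eigen i) (lift_eigen j) (lift_ne_zero i)
    (lift_ne_zero j) ?_
  rw [comp_dotProduct_comp, hA.eigenvectorBasis_dotProduct hij, mul_zero]

end Blowup

lemma SimpleGraph.adjMatrix_comap {V W : Type*} (G : SimpleGraph V) [DecidableRel G.Adj]
    (f : W → V) : (G.comap f).adjMatrix ℝ = (G.adjMatrix ℝ).submatrix f f := by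
  ext x y
  simp [SimpleGraph.adjMatrix_apply]

section SpecSum

variable {n : ℕ} (G : SimpleGraph (Fin n)) [DecidableRel G.Adj]

lemma add_eigenvalues_le_specSum {i j : Fin n} (hij : i ≠ j) :
    (adjMatrix_isHermitian G).eigenvalues i + (adjMatrix_isHermitian G).eigenvalues j ≤
      specSum G := by
  refine le_csSup ?_ ⟨i, j, hij, rfl⟩
  refine ((Set.finite_range fun p : Fin n × Fin n =>
    (adjMatrix_isHermitian G).eigenvalues p.1 + (adjMatrix_isHermitian G).eigenvalues p.2).subset
    ?_).bddAbove
  rintro _ ⟨a, b, -, rfl⟩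
  exact ⟨(a, b), rfl⟩

lemma specSum_le {B : ℝ} (hB : 0 ≤ B)
    (h : ∀ i j : Fin n, i ≠ j →
      (adjMatrix_isHermitian G).eigenvalues i + (adjMatrix_isHermitian G).eigenvalues j ≤ B) :
    specSum G ≤ B :=
  Real.sSup_le (by rintro _ ⟨i, j, hij, rfl⟩; exact h i j hij) hB

lemma mul_add_eigenvalues_le_specSum_comap_divNat {t : ℕ} (ht : t ≠ 0) {i j : Fin n}
    (hij : i ≠ j) :
    t * ((adjMatrix_isHermitian G).eigenvalues i + (adjMatrix_isHermitian G).eigenvalues j) ≤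
      specSum (G.comap (Fin.divNat : Fin (n * t) → Fin n)) := by
  obtain ⟨i', j', hij', hi', hj'⟩ := (adjMatrix_isHermitian G).exists_ne_eigenvalues_submatrix
    finProdFinEquiv.symm (adjMatrix_isHermitian _) (G.adjMatrix_comap _) ht hij
  rw [mul_add, ← hi', ← hj']
  exact add_eigenvalues_le_specSum _ hij'

end SpecSum

/-- if `c > 0` is such that `λ₁(G) + λ₂(G) ≤ c·n + o(n)` over all graphs
(i.e. for every `ε > 0` there is `N` with `λ₁(G) + λ₂(G) ≤ (c+ε)·n` for all graphs on
`n ≥ N` vertices), then in fact `λ₁(G) + λ₂(G) ≤ c·n` for every graph. -/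
theorem stmt7 (c : ℝ) (hc : 0 < c)
    (H : ∀ ε : ℝ, 0 < ε → ∃ N : ℕ, ∀ n : ℕ, N ≤ n →
      ∀ (G : SimpleGraph (Fin n)) (_ : DecidableRel G.Adj),
        specSum G ≤ (c + ε) * n) :
    ∀ (n : ℕ) (G : SimpleGraph (Fin n)) (_ : DecidableRel G.Adj),
      specSum G ≤ c * n := by
  intro n G _
  refine specSum_le G (by positivity) fun i j hij => ?_
  have hn : (0 : ℝ) < n := by exact_mod_cast i.pos
  have blowup_bound (ε : ℝ) (hε : 0 < ε) :
      (adjMatrix_isHermitian G).eigenvalues i + (adjMatrix_isHermitian G).eigenvalues j ≤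
        (c + ε) * n := by
    obtain ⟨N, hN⟩ := H ε hε
    have hNt : N ≤ n * (N + 1) := Nat.le_mul_of_pos_left _ i.pos |>.trans' N.le_succ
    have := (mul_add_eigenvalues_le_specSum_comap_divNat G N.succ_ne_zero hij).trans
      (hN _ hNt _ _)
    push_cast at this
    exact le_of_mul_le_mul_left (by linarith) (by positivity : (0 : ℝ) < N + 1)
  refine le_of_forall_pos_le_add fun δ hδ => ?_
  have := blowup_bound (δ / n) (by positivity)
  rwa [add_mul, div_mul_cancel₀ _ hn.ne'] at this
end

section
/- Let H_6 be the graph on vertices {1,…,6} with a loop at every vertex and non-loop edges {1,2}, {1,3}, {2,3}, {2,4}, {3,4}, {3,5}, {4,5}, {4,6}, {5,6}. For any nonnegative reals u_1,…,u_6 with u_1 + ⋯ + u_6 = 1, let M* be the 6×6 symmetric matrix with entries M*_{ij} = √(u_i u_j) if i ∼ j in H_6 (including i = j) and 0 otherwise. Then λ_1(M*) + λ_2(M*) ≤ 8/7. -/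
open Matrix

/-- The adjacency matrix (including loops) of the graph `H₆` on vertices `{1,…,6}`:
a loop at every vertex and non-loop edges
`{1,2},{1,3},{2,3},{2,4},{3,4},{3,5},{4,5},{4,6},{5,6}` (1-indexed). -/
def AH6 : Matrix (Fin 6) (Fin 6) ℝ :=
  !![1,1,1,0,0,0;
     1,1,1,1,0,0;
     1,1,1,1,1,0;
     0,1,1,1,1,1;
     0,0,1,1,1,1;
     0,0,0,1,1,1]

/-- The weighted matrix `M* = D_u^{1/2} A(H₆) D_u^{1/2}`, with entries
`√(uᵢ uⱼ)` when `i ∼ j` in `H₆` (including `i = j`) and `0` otherwise. -/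
noncomputable def MstarH6 (u : Fin 6 → ℝ) : Matrix (Fin 6) (Fin 6) ℝ :=
  fun i j => Real.sqrt (u i * u j) * AH6 i j

/-!
For orthonormal eigenvectors `v, w` of `M` with eigenvalues `λ, μ`, the antisymmetric tensor
`y = v ∧ w` has `∑ a b, (y a b)² = 2` and `∑ a b c, M a c * y a b * y c b = λ + μ`: this is the
quadratic form of the second additive compound of `M`, whose eigenvalues are the sums of pairs of
eigenvalues of `M`. For `M* = D A(H₆) D` with `D = diag (√uᵢ)`, an explicit sum of squares bounds
this form by `4/7 · tr M* · ∑ a b, (y a b)²` on all antisymmetric `y`, and `tr M* = ∑ uᵢ = 1`.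
-/

open Finset

def wedge {n : Type*} (v w : n → ℝ) (a b : n) : ℝ := v a * w b - v b * w a

def compoundForm {n : Type*} [Fintype n] (M : Matrix n n ℝ) (y : n → n → ℝ) : ℝ :=
  ∑ a, ∑ b, ∑ c, M a c * y a b * y c b

section Wedge

variable {n : Type*} (v w : n → ℝ)

theorem wedge_swap (a b : n) : wedge v w b a = -wedge v w a b := by
  simp only [wedge]; ring

variable [Fintype n]

theorem sum_wedge_mul_wedge (a c : n) :
    ∑ b, wedge v w a b * wedge v w c b =
      v a * v c * (w ⬝ᵥ w) - (v a * w c + w a * v c) * (v ⬝ᵥ w)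
        + w a * w c * (v ⬝ᵥ v) := by
  simp only [wedge, dotProduct, mul_sum, ← sum_add_distrib, ← sum_sub_distrib]
  exact sum_congr rfl fun b _ => by ring

theorem sum_sum_wedge_sq :
    ∑ a, ∑ b, wedge v w a b ^ 2 = 2 * ((v ⬝ᵥ v) * (w ⬝ᵥ w) - (v ⬝ᵥ w) ^ 2) := by
  simp only [sq, sum_wedge_mul_wedge, sum_add_distrib, sum_sub_distrib, ← sum_mul]
  simp only [dotProduct, mul_comm (w _) (v _)]
  ring

theorem compoundForm_wedge (M : Matrix n n ℝ) :
    compoundForm M (wedge v w) =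
      (w ⬝ᵥ w) * (v ⬝ᵥ M *ᵥ v) + (v ⬝ᵥ v) * (w ⬝ᵥ M *ᵥ w)
        - (v ⬝ᵥ w) * (v ⬝ᵥ M *ᵥ w + w ⬝ᵥ M *ᵥ v) := by
  have h a : ∑ b, ∑ c, M a c * wedge v w a b * wedge v w c b =
      ∑ c, M a c * ∑ b, wedge v w a b * wedge v w c b := by
    rw [sum_comm]; simp only [mul_sum, mul_assoc]
  simp only [compoundForm, h, sum_wedge_mul_wedge]
  generalize v ⬝ᵥ v = vv, w ⬝ᵥ w = ww, v ⬝ᵥ w = vw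
  simp only [dotProduct, mulVec, mul_sum, ← sum_add_distrib, ← sum_sub_distrib]
  exact sum_congr rfl fun a _ => sum_congr rfl fun c _ => by ring

end Wedge

theorem compoundForm_wedge_of_mulVec_eq_smul {n : Type*} [Fintype n] {M : Matrix n n ℝ}
    {v w : n → ℝ} {l m : ℝ} (hv : M *ᵥ v = l • v) (hw : M *ᵥ w = m • w)
    (hvv : v ⬝ᵥ v = 1) (hww : w ⬝ᵥ w = 1) (hvw : v ⬝ᵥ w = 0) :
    compoundForm M (wedge v w) = l + m := by
  rw [compoundForm_wedge, hv, hw, dotProduct_smul, dotProduct_smul, hvv, hww, hvw]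
  simp

theorem OrthonormalBasis.dotProduct_eq_ite {ι n : Type*} [Fintype ι] [Fintype n]
    [DecidableEq ι] (b : OrthonormalBasis ι ℝ (EuclideanSpace ℝ n)) (i j : ι) :
    ⇑(b i) ⬝ᵥ ⇑(b j) = if i = j then 1 else 0 := by
  rw [← orthonormal_iff_ite.mp b.orthonormal i j, EuclideanSpace.inner_eq_star_dotProduct,
    star_trivial, dotProduct_comm]

theorem MstarH6_eq {u : Fin 6 → ℝ} (hu : ∀ i, 0 ≤ u i) :
    MstarH6 u = of fun a c => √(u a) * √(u c) * AH6 a c := by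
  ext a c
  simp only [MstarH6, of_apply, Real.sqrt_mul (hu a)]

theorem compoundForm_weighted_AH6_le (s : Fin 6 → ℝ) {y : Fin 6 → Fin 6 → ℝ}
    (hy : ∀ a b, y b a = -y a b) :
    compoundForm (of fun a c => s a * s c * AH6 a c) y ≤
      4 / 7 * (∑ a, s a ^ 2) * ∑ a, ∑ b, y a b ^ 2 := by
  have hdiag a : y a a = 0 := by linarith [hy a a]
  simp only [compoundForm, AH6, of_apply, Fin.sum_univ_six, Matrix.cons_val, hdiag,
    hy 0 1, hy 0 2, hy 0 3, hy 0 4, hy 0 5, hy 1 2, hy 1 3, hy 1 4, hy 1 5,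
    hy 2 3, hy 2 4, hy 2 5, hy 3 4, hy 3 5, hy 4 5]
  rw [← sub_nonneg]
  convert (show 0 ≤
        (1 / 7) * (s 0 * y 0 1 - s 2 * y 1 2 - s 3 * y 1 3 + s 4 * y 1 4 + s 5 * y 1 5) ^ 2
      + (1 / 7) * (s 0 * y 0 2 + s 1 * y 1 2 - s 3 * y 2 3 - s 4 * y 2 4 + s 5 * y 2 5) ^ 2
      + (1 / 7) * (s 0 * y 0 3 - s 1 * y 1 3 - s 2 * y 2 3 + s 4 * y 3 4 + s 5 * y 3 5) ^ 2
      + (1 / 7) * (s 0 * y 0 4 + s 1 * y 1 4 - s 2 * y 2 4 - s 3 * y 3 4 + s 5 * y 4 5) ^ 2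
      + (1 / 7) * (s 0 * y 0 5 - (1 / 2) * s 1 * y 1 5 - (1 / 2) * s 2 * y 2 5
          + (1 / 2) * s 3 * y 3 5 + (1 / 2) * s 4 * y 4 5) ^ 2
      + (3 / 28) * (s 1 * y 1 5 + s 2 * y 2 5 - s 3 * y 3 5 - s 4 * y 4 5) ^ 2
      + (8 / 7) * (s 0 * y 1 2 - s 1 * y 0 2 + s 2 * y 0 1) ^ 2
      + (8 / 7) * (s 0 * y 1 3 - (3 / 4) * s 1 * y 0 3 + (1 / 8) * s 3 * y 0 1) ^ 2
      + (9 / 8) * (- (2 / 3) * s 1 * y 0 3 + s 3 * y 0 1) ^ 2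
      + (8 / 7) * (s 0 * y 1 4 - s 1 * y 0 4 - (1 / 8) * s 4 * y 0 1) ^ 2
      + (9 / 8) * (s 4 * y 0 1) ^ 2
      + (8 / 7) * (s 0 * y 1 5 - (13 / 16) * s 1 * y 0 5 - (1 / 8) * s 5 * y 0 1) ^ 2
      + (9 / 8) * (- (1 / 6) * s 1 * y 0 5 + s 5 * y 0 1) ^ 2
      + (5 / 14) * (s 1 * y 0 5) ^ 2
      + (8 / 7) * (s 0 * y 2 3 - (3 / 4) * s 2 * y 0 3 + (1 / 8) * s 3 * y 0 2) ^ 2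
      + (9 / 8) * (- (2 / 3) * s 2 * y 0 3 + s 3 * y 0 2) ^ 2
      + (8 / 7) * (s 0 * y 2 4 - (3 / 4) * s 2 * y 0 4 + (1 / 8) * s 4 * y 0 2) ^ 2
      + (9 / 8) * (- (2 / 3) * s 2 * y 0 4 + s 4 * y 0 2) ^ 2
      + (8 / 7) * (s 0 * y 2 5 - (13 / 16) * s 2 * y 0 5 - (1 / 8) * s 5 * y 0 2) ^ 2
      + (9 / 8) * (- (1 / 6) * s 2 * y 0 5 + s 5 * y 0 2) ^ 2
      + (5 / 14) * (s 2 * y 0 5) ^ 2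
      + (8 / 7) * (s 0 * y 3 4 + (1 / 8) * s 3 * y 0 4 - (1 / 8) * s 4 * y 0 3) ^ 2
      + (9 / 8) * (s 3 * y 0 4 - s 4 * y 0 3) ^ 2
      + (8 / 7) * (s 0 * y 3 5 - (1 / 16) * s 3 * y 0 5 - (1 / 8) * s 5 * y 0 3) ^ 2
      + (255 / 224) * (s 3 * y 0 5 - (14 / 17) * s 5 * y 0 3) ^ 2
      + (6 / 17) * (s 5 * y 0 3) ^ 2
      + (8 / 7) * (s 0 * y 4 5 - (1 / 16) * s 4 * y 0 5 - (1 / 8) * s 5 * y 0 4) ^ 2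
      + (255 / 224) * (s 4 * y 0 5 - (14 / 17) * s 5 * y 0 4) ^ 2
      + (6 / 17) * (s 5 * y 0 4) ^ 2
      + (1 / 7) * (s 1 * y 0 1 + s 2 * y 0 2 - s 3 * y 0 3 - s 4 * y 0 4
          + (1 / 2) * s 5 * y 0 5) ^ 2
      + (3 / 28) * (s 5 * y 0 5) ^ 2
      + (8 / 7) * (s 1 * y 2 3 - s 2 * y 1 3 + s 3 * y 1 2) ^ 2
      + (8 / 7) * (s 1 * y 2 4 - (3 / 4) * s 2 * y 1 4 + (1 / 8) * s 4 * y 1 2) ^ 2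
      + (9 / 8) * (- (2 / 3) * s 2 * y 1 4 + s 4 * y 1 2) ^ 2
      + (8 / 7) * (s 1 * y 2 5 - s 2 * y 1 5 - (1 / 8) * s 5 * y 1 2) ^ 2
      + (9 / 8) * (s 5 * y 1 2) ^ 2
      + (8 / 7) * (s 1 * y 3 4 - (3 / 4) * s 3 * y 1 4 + (1 / 8) * s 4 * y 1 3) ^ 2
      + (9 / 8) * (- (2 / 3) * s 3 * y 1 4 + s 4 * y 1 3) ^ 2
      + (8 / 7) * (s 1 * y 3 5 - (3 / 4) * s 3 * y 1 5 + (1 / 8) * s 5 * y 1 3) ^ 2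
      + (9 / 8) * (- (2 / 3) * s 3 * y 1 5 + s 5 * y 1 3) ^ 2
      + (8 / 7) * (s 1 * y 4 5 + (1 / 8) * s 4 * y 1 5 - (1 / 8) * s 5 * y 1 4) ^ 2
      + (9 / 8) * (s 4 * y 1 5 - s 5 * y 1 4) ^ 2
      + (8 / 7) * (s 2 * y 3 4 - s 3 * y 2 4 + s 4 * y 2 3) ^ 2
      + (8 / 7) * (s 2 * y 3 5 - (3 / 4) * s 3 * y 2 5 + (1 / 8) * s 5 * y 2 3) ^ 2
      + (9 / 8) * (- (2 / 3) * s 3 * y 2 5 + s 5 * y 2 3) ^ 2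
      + (8 / 7) * (s 2 * y 4 5 - (3 / 4) * s 4 * y 2 5 + (1 / 8) * s 5 * y 2 4) ^ 2
      + (9 / 8) * (- (2 / 3) * s 4 * y 2 5 + s 5 * y 2 4) ^ 2
      + (8 / 7) * (s 3 * y 4 5 - s 4 * y 3 5 + s 5 * y 3 4) ^ 2 by positivity) using 1
  ring

theorem add_le_of_MstarH6_mulVec_eq_smul {u : Fin 6 → ℝ} (hu : ∀ i, 0 ≤ u i)
    (hsum : ∑ i, u i = 1) {v w : Fin 6 → ℝ} {l m : ℝ}
    (hv : MstarH6 u *ᵥ v = l • v) (hw : MstarH6 u *ᵥ w = m • w)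
    (hvv : v ⬝ᵥ v = 1) (hww : w ⬝ᵥ w = 1) (hvw : v ⬝ᵥ w = 0) :
    l + m ≤ 8 / 7 := by
  have htrace : ∑ a, √(u a) ^ 2 = 1 := by simp only [Real.sq_sqrt (hu _), hsum]
  calc l + m = compoundForm (MstarH6 u) (wedge v w) :=
        (compoundForm_wedge_of_mulVec_eq_smul hv hw hvv hww hvw).symm
    _ ≤ 4 / 7 * (∑ a, √(u a) ^ 2) * ∑ a, ∑ b, wedge v w a b ^ 2 := by
        rw [MstarH6_eq hu]
        exact compoundForm_weighted_AH6_le _ (wedge_swap v w)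
    _ = 8 / 7 := by
        rw [htrace, sum_sum_wedge_sq, hvv, hww, hvw]
        norm_num

/-- for nonnegative weights summing to 1, the sum of any two distinct
eigenvalues of `M*` (in particular, `λ₁(M*) + λ₂(M*)`) is at most `8/7`. -/
theorem stmt13 (u : Fin 6 → ℝ) (hu : ∀ i, 0 ≤ u i) (hsum : ∑ i, u i = 1)
    (hM : (MstarH6 u).IsHermitian) :
    ∀ i j : Fin 6, i ≠ j →
      hM.eigenvalues i + hM.eigenvalues j ≤ (8 / 7 : ℝ) := by
  intro i j hij
  have hbasis := hM.eigenvectorBasis.dotProduct_eq_ite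
  exact add_le_of_MstarH6_mulVec_eq_smul hu hsum (hM.mulVec_eigenvectorBasis i)
    (hM.mulVec_eigenvectorBasis j) (by simp [hbasis]) (by simp [hbasis]) (by simp [hbasis, hij])
end
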